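/- arXiv:0811.3987 — 9 statements merged into one kernel-verified Lean document; each statement's English description precedes it below -/
import Mathlib

section
/- Let a, α ∈ ℕ and X_{a,α} = {0} ∪ { Σ_{i=1}^k 2^{-m_i} : 1 ≤ k ≤ a, α ≤ m_1 < ... < m_k }. If x_0 = Σ_{i=1}^k 2^{-m_i} with α ≤ m_1 < ... < m_k and 1 ≤ k ≤ a, then the intersection of X_{a,α} with the interval (x_0 - 2^{-m_k - a}, x_0] equals {x_0}. -/
/-!
Two sums of distinct powers `2⁻¹ ^ m` are compared at the least exponent `d` where the index
sets differ. Any `k` distinct powers with exponents above `d` add up to at most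
`2⁻¹ ^ d - 2⁻¹ ^ (d + k)`, the extreme case being the exponents `d + 1, …, d + k`. Hence the set
containing `d` has the larger sum, and the gap is at least `2⁻¹ ^ (d + k)`, where `k ≤ a` counts the
exponents of the other set not in the first. For `x = ∑ m ∈ u, 2⁻¹ ^ m ∈ X_{a,α}` (with `0` the
empty sum) below `x₀ = ∑ m ∈ s, 2⁻¹ ^ m` this gap is at least `2⁻¹ ^ (max s + a)`, since `d ∈ s`.
-/

/-- The set `X_{a,α} = {0} ∪ { ∑_{i=1}^k 2^{-m_i} : 1 ≤ k ≤ a, α ≤ m_1 < ⋯ < m_k }`. -/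
def dyadicSet (a α : ℕ) : Set ℝ :=
  {0} ∪ {x | ∃ s : Finset ℕ, s.Nonempty ∧ s.card ≤ a ∧ (∀ m ∈ s, α ≤ m) ∧
    x = ∑ m ∈ s, (2 : ℝ) ^ (-(m : ℤ))}

open Finset

open scoped symmDiff in
theorem Finset.exists_mem_sdiff_forall_lt_of_ne {α : Type*} [LinearOrder α] {s u : Finset α}
    (h : s ≠ u) :
    (∃ d ∈ s \ u, ∀ m ∈ u \ s, d < m) ∨ ∃ d ∈ u \ s, ∀ m ∈ s \ u, d < m := by
  have hne : (s ∆ u).Nonempty := symmDiff_nonempty.2 h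
  have hmin : ∀ m ∈ s ∆ u, m ≠ (s ∆ u).min' hne → (s ∆ u).min' hne < m := fun m hm hmd =>
    lt_of_le_of_ne (min'_le _ m hm) (Ne.symm hmd)
  rcases mem_symmDiff.1 ((s ∆ u).min'_mem hne) with hd | hd
  · refine .inl ⟨_, mem_sdiff.2 hd, fun m hm => hmin m (mem_symmDiff.2 (.inr (mem_sdiff.1 hm))) ?_⟩
    rintro rfl; exact (mem_sdiff.1 hm).2 hd.1
  · refine .inr ⟨_, mem_sdiff.2 hd, fun m hm => hmin m (mem_symmDiff.2 (.inl (mem_sdiff.1 hm))) ?_⟩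
    rintro rfl; exact (mem_sdiff.1 hm).2 hd.1

section
variable {R : Type*} [CommRing R] [LinearOrder R] [IsStrictOrderedRing R] {r : R}

theorem sum_pow_add_pow_add_card_le (hr0 : 0 ≤ r) (hr : 2 * r ≤ 1) {d : ℕ} {u : Finset ℕ}
    (hu : ∀ m ∈ u, d < m) : ∑ m ∈ u, r ^ m + r ^ (d + #u) ≤ r ^ d := by
  induction u using Finset.induction_on_max with
  | empty => simp
  | insert a u hlt ih =>
    have ha : a ∉ u := fun h => (hlt a h).false
    have hcard : d + #u + 1 ≤ a := by
      have hsub : u ⊆ Ioo d a := fun m hm => mem_Ioo.2 ⟨hu m (mem_insert_of_mem hm), hlt m hm⟩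
      have hIoo := (card_le_card hsub).trans_eq (Nat.card_Ioo d a)
      have hda := hu a (mem_insert_self a u)
      omega
    have hu' := ih fun m hm => hu m (mem_insert_of_mem hm)
    have ha_le : r ^ a ≤ r ^ (d + #u + 1) := pow_le_pow_of_le_one hr0 (by linarith) hcard
    have hhalf : 2 * r ^ (d + #u + 1) ≤ r ^ (d + #u) := by
      rw [pow_succ]; nlinarith [pow_nonneg hr0 (d + #u)]
    rw [sum_insert ha, card_insert_of_notMem ha, ← add_assoc]
    linarith

theorem sum_pow_add_pow_le_sum_pow (hr0 : 0 ≤ r) (hr : 2 * r ≤ 1) {s u : Finset ℕ} {d : ℕ}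
    (hd : d ∈ s \ u) (hlt : ∀ m ∈ u \ s, d < m) :
    ∑ m ∈ u, r ^ m + r ^ (d + #(u \ s)) ≤ ∑ m ∈ s, r ^ m := by
  have hs := sum_inter_add_sum_sdiff s u (r ^ ·)
  have hu := sum_inter_add_sum_sdiff u s (r ^ ·)
  rw [inter_comm] at hu
  have hd_le : r ^ d ≤ ∑ m ∈ s \ u, r ^ m :=
    single_le_sum (f := (r ^ ·)) (fun m _ => pow_nonneg hr0 m) hd
  have htail := sum_pow_add_pow_add_card_le hr0 hr hlt
  linarith

theorem eq_of_sum_pow_mem_Ioc (hr0 : 0 < r) (hr : 2 * r ≤ 1) {a : ℕ} {s u : Finset ℕ}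
    (hs : s.Nonempty) (hu : #u ≤ a)
    (h : ∑ m ∈ u, r ^ m ∈ Set.Ioc (∑ m ∈ s, r ^ m - r ^ (s.max' hs + a)) (∑ m ∈ s, r ^ m)) :
    u = s := by
  by_contra hne
  obtain ⟨hlo, hhi⟩ := h
  rcases exists_mem_sdiff_forall_lt_of_ne (Ne.symm hne) with ⟨d, hd, hlt⟩ | ⟨d, hd, hlt⟩
  · have hgap := sum_pow_add_pow_le_sum_pow hr0.le hr hd hlt
    have hexp : d + #(u \ s) ≤ s.max' hs + a :=
      add_le_add (le_max' _ _ (mem_sdiff.1 hd).1) ((card_le_card sdiff_subset).trans hu)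
    have hpow := pow_le_pow_of_le_one hr0.le (by linarith) hexp
    linarith
  · have hgap := sum_pow_add_pow_le_sum_pow hr0.le hr hd hlt
    have hpos := pow_pos hr0 (d + #(s \ u))
    linarith

end

theorem two_zpow_neg_natCast (n : ℕ) : (2 : ℝ) ^ (-(n : ℤ)) = 2⁻¹ ^ n := by
  rw [zpow_neg, zpow_natCast, inv_pow]

theorem exists_card_le_of_mem_dyadicSet {a α : ℕ} {x : ℝ} (hx : x ∈ dyadicSet a α) :
    ∃ u : Finset ℕ, #u ≤ a ∧ x = ∑ m ∈ u, (2⁻¹ : ℝ) ^ m := by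
  rcases hx with hx | ⟨u, -, hu, -, rfl⟩
  · exact ⟨∅, by simp, by simpa using hx⟩
  · exact ⟨u, hu, by simp only [two_zpow_neg_natCast]⟩

/-- If `x₀ = ∑_{i=1}^k 2^{-m_i}` with `α ≤ m_1 < ⋯ < m_k`, `1 ≤ k ≤ a`, then
`X_{a,α} ∩ (x₀ - 2^{-m_k - a}, x₀] = {x₀}`. -/
theorem dyadicSet_inter_Ioc (a α : ℕ) (s : Finset ℕ) (hs : s.Nonempty)
    (hcard : s.card ≤ a) (hα : ∀ m ∈ s, α ≤ m) :
    dyadicSet a α ∩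
      Set.Ioc ((∑ m ∈ s, (2 : ℝ) ^ (-(m : ℤ))) - 2 ^ (-((s.max' hs : ℤ) + a)))
        (∑ m ∈ s, (2 : ℝ) ^ (-(m : ℤ))) = {∑ m ∈ s, (2 : ℝ) ^ (-(m : ℤ))} := by
  have hgap : (2 : ℝ) ^ (-((s.max' hs : ℤ) + a)) = 2⁻¹ ^ (s.max' hs + a) := by
    rw [← two_zpow_neg_natCast]; push_cast; rfl
  refine Set.eq_singleton_iff_unique_mem.2 ⟨⟨Or.inr ⟨s, hs, hcard, hα, rfl⟩, ?_, le_rfl⟩, ?_⟩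
  · rw [hgap]
    linarith [pow_pos (by norm_num : (0 : ℝ) < 2⁻¹) (s.max' hs + a)]
  · rintro x ⟨hx, hIoc⟩
    obtain ⟨u, hu, rfl⟩ := exists_card_le_of_mem_dyadicSet hx
    simp only [two_zpow_neg_natCast, hgap] at hIoc ⊢
    rw [eq_of_sum_pow_mem_Ioc (by norm_num) (by norm_num) hs hu hIoc]
end

section
/- Let a, α ∈ ℕ, let x_0 = Σ_{i=1}^k 2^{-m_i} with α ≤ m_1 < ... < m_k, 1 ≤ k ≤ a, and let β > m_k. Define Y = { Σ_{i=1}^{k+l} 2^{-m_i} : 0 ≤ l ≤ a-k, β ≤ m_{k+1} < ... < m_{k+l} }. Then Y is an open subset of X_{a,α} in the subspace topology inherited from ℝ. -/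
/-!
Finite sums of distinct powers `2⁻¹ ^ m` compare like binary expansions: if two index sets
first differ at `m`, the one containing `m` has the larger sum, by at least `2⁻¹ ^ (m + c)` when
the other has at most `c` indices beyond `m`, and by at least `2⁻¹ ^ K` when those indices are
at most `K`. Write `β = b + 1`. A point of `X_{a,α}` lying in
`(x₀ - 2⁻¹ ^ (b + a), x₀ + 2⁻¹ ^ b)` therefore cannot first differ from `x₀` at an index `≤ b`,
so it contains every index of `x₀` and otherwise only indices `≥ β`; conversely every point of
`Y` lies in that interval, since indices `≥ β` contribute less than `2⁻¹ ^ b`.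
-/

open Finset
open scoped symmDiff

/-- Written with `2⁻¹ ^ m` rather than `2 ^ (-m)` so that exponents stay in `ℕ`. -/
noncomputable def dyadicSum (s : Finset ℕ) : ℝ := ∑ m ∈ s, (2⁻¹ : ℝ) ^ m

lemma dyadicSum_eq_sum_zpow (s : Finset ℕ) :
    dyadicSum s = ∑ m ∈ s, (2 : ℝ) ^ (-(m : ℤ)) := by
  simp only [dyadicSum, zpow_neg, zpow_natCast, inv_pow]

lemma dyadicSum_nonneg (s : Finset ℕ) : 0 ≤ dyadicSum s :=
  sum_nonneg fun _ _ => by positivity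

lemma pow_le_dyadicSum {s : Finset ℕ} {m : ℕ} (hm : m ∈ s) : (2⁻¹ : ℝ) ^ m ≤ dyadicSum s :=
  single_le_sum (f := fun j => (2⁻¹ : ℝ) ^ j) (fun _ _ => by positivity) hm

lemma dyadicSum_le_mul_of_card_le {t : Finset ℕ} {m c : ℕ} (ht : ∀ j ∈ t, m < j)
    (hc : #t ≤ c) : dyadicSum t ≤ 2⁻¹ ^ m * (1 - 2⁻¹ ^ c) := by
  induction t using Finset.induction_on_min generalizing m c with
  | empty =>
    exact mul_nonneg (by positivity) (sub_nonneg.mpr (pow_le_one₀ (by norm_num) (by norm_num)))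
  | insert a t hat ih =>
    have hna : a ∉ t := fun h => (hat a h).false
    obtain ⟨k, rfl⟩ : ∃ k, a = k + 1 := ⟨a - 1, by have := ht a (mem_insert_self a t); omega⟩
    obtain ⟨c, rfl⟩ : ∃ c', c = c' + 1 := ⟨c - 1, by rw [card_insert_of_notMem hna] at hc; omega⟩
    have hmk : m ≤ k := Nat.lt_succ_iff.mp (ht _ (mem_insert_self _ t))
    have htc : #t ≤ c := by rw [card_insert_of_notMem hna] at hc; omega
    calc dyadicSum (insert (k + 1) t) = 2⁻¹ ^ (k + 1) + dyadicSum t := sum_insert hna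
      _ ≤ 2⁻¹ ^ (k + 1) + 2⁻¹ ^ (k + 1) * (1 - 2⁻¹ ^ c) := by gcongr; exact ih hat htc
      _ = 2⁻¹ ^ k * (1 - 2⁻¹ ^ (c + 1)) := by ring
      _ ≤ 2⁻¹ ^ m * (1 - 2⁻¹ ^ (c + 1)) := by
        gcongr ?_ * _
        · exact sub_nonneg.mpr (pow_le_one₀ (by norm_num) (by norm_num))
        · exact pow_le_pow_of_le_one (by norm_num) (by norm_num) hmk

lemma dyadicSum_add_pow_le_of_card_le {t : Finset ℕ} {m c : ℕ} (ht : ∀ j ∈ t, m < j)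
    (hc : #t ≤ c) : dyadicSum t + 2⁻¹ ^ (m + c) ≤ 2⁻¹ ^ m := by
  have := dyadicSum_le_mul_of_card_le ht hc
  rw [pow_add]
  linarith

lemma dyadicSum_lt_pow {t : Finset ℕ} {m : ℕ} (ht : ∀ j ∈ t, m < j) :
    dyadicSum t < 2⁻¹ ^ m := by
  have := dyadicSum_add_pow_le_of_card_le ht le_rfl
  have : (0 : ℝ) < 2⁻¹ ^ (m + #t) := by positivity
  linarith

lemma dyadicSum_add_pow_le_of_subset_Ioc {t : Finset ℕ} {m K : ℕ} (hmK : m ≤ K)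
    (ht : t ⊆ Ioc m K) : dyadicSum t + 2⁻¹ ^ K ≤ 2⁻¹ ^ m := by
  have hc : #t ≤ K - m := (card_le_card ht).trans (Nat.card_Ioc m K).le
  simpa only [Nat.add_sub_cancel' hmK] using
    dyadicSum_add_pow_le_of_card_le (fun j hj => (Finset.mem_Ioc.mp (ht hj)).1) hc

lemma dyadicSum_add_le_of_agree_below {s r : Finset ℕ} {m : ℕ} {ε : ℝ} (hms : m ∈ s)
    (hmr : m ∉ r) (hagree : ∀ j < m, j ∈ r ↔ j ∈ s)
    (htail : dyadicSum (r.filter (m < ·)) + ε ≤ 2⁻¹ ^ m) :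
    dyadicSum r + ε ≤ dyadicSum s := by
  have hpre : r.filter (· < m) = s.filter (· < m) := by
    ext j
    simp only [mem_filter]
    exact ⟨fun ⟨hj, hjm⟩ => ⟨(hagree j hjm).1 hj, hjm⟩, fun ⟨hj, hjm⟩ => ⟨(hagree j hjm).2 hj, hjm⟩⟩
  have hr : r.filter (¬ · < m) = r.filter (m < ·) := by
    refine filter_congr fun j hj => ?_
    exact ⟨fun h => lt_of_le_of_ne (not_lt.mp h) (fun he => hmr (he ▸ hj)), fun h => h.not_gt⟩
  have hs : 2⁻¹ ^ m ≤ dyadicSum (s.filter (¬ · < m)) :=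
    pow_le_dyadicSum (mem_filter.mpr ⟨hms, lt_irrefl m⟩)
  have hsplit : ∀ u : Finset ℕ,
      dyadicSum u = dyadicSum (u.filter (· < m)) + dyadicSum (u.filter (¬ · < m)) :=
    fun u => (sum_filter_add_sum_filter_not u _ _).symm
  rw [hsplit r, hsplit s, hpre, hr]
  linarith

lemma subset_of_dyadicSum_mem_Ioo {s r : Finset ℕ} {a b : ℕ} (hs : ∀ j ∈ s, j ≤ b)
    (hr : #r ≤ a)
    (hlo : dyadicSum s - 2⁻¹ ^ (b + a) < dyadicSum r) (hhi : dyadicSum r < dyadicSum s + 2⁻¹ ^ b) :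
    s ⊆ r ∧ ∀ j ∈ r \ s, b < j := by
  suffices h : ∀ j ∈ s ∆ r, b < j by
    refine ⟨fun j hj => ?_, fun j hj => h j (mem_symmDiff.mpr (Or.inr (mem_sdiff.mp hj)))⟩
    by_contra hjr
    exact (h j (mem_symmDiff.mpr (Or.inl ⟨hj, hjr⟩))).not_ge (hs j hj)
  by_contra! ⟨j, hj, hjb⟩
  set m := (s ∆ r).min' ⟨j, hj⟩
  have hmb : m ≤ b := (min'_le _ j hj).trans hjb
  have hagree : ∀ i < m, i ∈ r ↔ i ∈ s := fun i him => by
    by_contra hi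
    exact (min'_le _ i (mem_symmDiff.mpr (by tauto))).not_gt him
  rcases mem_symmDiff.mp (min'_mem _ ⟨j, hj⟩) with ⟨hms, hmr⟩ | ⟨hmr, hms⟩
  · have htail := dyadicSum_add_pow_le_of_card_le (t := r.filter (m < ·))
      (fun i hi => (mem_filter.mp hi).2) ((card_filter_le _ _).trans hr)
    have hgap : (2⁻¹ : ℝ) ^ (b + a) ≤ 2⁻¹ ^ (m + a) :=
      pow_le_pow_of_le_one (by norm_num) (by norm_num) (by omega)
    have := dyadicSum_add_le_of_agree_below (ε := 2⁻¹ ^ (b + a)) hms hmr hagree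
      (by linarith)
    linarith
  · have htail := dyadicSum_add_pow_le_of_subset_Ioc (t := s.filter (m < ·)) hmb fun i hi =>
      Finset.mem_Ioc.mpr ⟨(mem_filter.mp hi).2, hs i (mem_filter.mp hi).1⟩
    have := dyadicSum_add_le_of_agree_below hmr hms (fun i hi => (hagree i hi).symm) htail
    linarith

/-- With `x₀ = ∑_{m ∈ s} 2^{-m}` (where `α ≤ m` for `m ∈ s`, `1 ≤ s.card ≤ a`) and
`β > max s`, the set `Y` of all sums `x₀ + ∑_{m ∈ t} 2^{-m}` with `t.card ≤ a - s.card` and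
all elements of `t` at least `β` is open in the subspace topology of `X_{a,α}`. -/
theorem dyadicSet_Y_isOpen (a α β : ℕ) (s : Finset ℕ) (hs : s.Nonempty)
    (hcard : s.card ≤ a) (hα : ∀ m ∈ s, α ≤ m) (hβ : s.max' hs < β) :
    ∃ U : Set ℝ, IsOpen U ∧
      U ∩ dyadicSet a α =
        {x | ∃ t : Finset ℕ, t.card ≤ a - s.card ∧ (∀ m ∈ t, β ≤ m) ∧
          x = (∑ m ∈ s, (2 : ℝ) ^ (-(m : ℤ))) + ∑ m ∈ t, (2 : ℝ) ^ (-(m : ℤ))} := by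
  obtain ⟨b, rfl⟩ : ∃ b, β = b + 1 := ⟨β - 1, by omega⟩
  have hsb : ∀ j ∈ s, j ≤ b := fun j hj => Nat.lt_succ_iff.mp ((s.le_max' j hj).trans_lt hβ)
  refine ⟨Set.Ioo (dyadicSum s - 2⁻¹ ^ (b + a)) (dyadicSum s + 2⁻¹ ^ b), isOpen_Ioo, ?_⟩
  ext x
  simp only [dyadicSet, ← dyadicSum_eq_sum_zpow, Set.mem_inter_iff, Set.mem_Ioo, Set.mem_union,
    Set.mem_singleton_iff, Set.mem_ofPred_eq, Nat.succ_le_iff]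
  constructor
  · rintro ⟨⟨hlo, hhi⟩, rfl | ⟨r, -, hr, -, rfl⟩⟩
    · have hsum : dyadicSum ∅ = 0 := sum_empty
      rw [← hsum] at hlo hhi
      exact absurd (subset_empty.mp (subset_of_dyadicSum_mem_Ioo hsb (by simp) hlo hhi).1)
        hs.ne_empty
    · obtain ⟨hsr, hrs⟩ := subset_of_dyadicSum_mem_Ioo hsb hr hlo hhi
      refine ⟨r \ s, by rw [card_sdiff_of_subset hsr]; omega, hrs, ?_⟩
      rw [add_comm]
      exact (sum_sdiff hsr).symm
  · rintro ⟨t, ht, htb, rfl⟩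
    have hst : Disjoint s t := disjoint_left.mpr fun j hjs hjt => (hsb j hjs).not_gt (htb j hjt)
    refine ⟨⟨?_, ?_⟩, Or.inr ⟨s ∪ t, hs.mono subset_union_left, ?_, ?_, (sum_union hst).symm⟩⟩
    · linarith [dyadicSum_nonneg t, pow_pos (by norm_num : (0 : ℝ) < 2⁻¹) (b + a)]
    · linarith [dyadicSum_lt_pow htb]
    · rw [card_union_of_disjoint hst]; omega
    · obtain ⟨i, hi⟩ := hs
      exact fun j hj => (mem_union.mp hj).elim (hα j) fun hjt =>
        (hα i hi).trans ((hsb i hi).trans (htb j hjt).le)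
end

section
/- Let S be a discrete semigroup. Then S is weakly cancellative (all left and right translation maps s ↦ st and s ↦ ts are finite-to-one) if and only if c_0(S) is a submodule of ℓ^∞(S) = ℓ^1(S)^* under the canonical ℓ^1(S)-bimodule actions. -/
/-!
A map `g` pulls `c₀` back into `c₀` exactly when it has finite fibres: finite fibres make `g`
tend to the cofinite filter along itself, and conversely the point mass at `b` stays in `c₀`
after composing with `g` only if `g ⁻¹' {b}` is finite. Apply this to the translations
`r ↦ r * s` and `r ↦ s * r`.
-/

open Filter Topology

theorem finite_fibers_iff_forall_tendsto_zero_comp {α β M : Type*} [Zero M]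
    [TopologicalSpace M] [T1Space M] [Nontrivial M] {g : α → β} :
    (∀ b, {a | g a = b}.Finite) ↔
      ∀ f : β → M, Tendsto f cofinite (𝓝 0) → Tendsto (f ∘ g) cofinite (𝓝 0) := by
  classical
  refine ⟨fun hg f hf => hf.comp (Tendsto.cofinite_of_finite_preimage_singleton
    fun b => (hg b).to_subtype), fun h b => ?_⟩
  obtain ⟨x, hx⟩ := exists_ne (0 : M)
  have hsingle : Tendsto (Pi.single b x : β → M) cofinite (𝓝 0) :=
    tendsto_const_nhds.congr' <| (eventually_cofinite_ne b).mono fun c hc => by simp [hc]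
  have hfinite : ((Pi.single b x : β → M) ∘ g ⁻¹' {x}).Finite := by
    simpa using h _ hsingle (compl_singleton_mem_nhds hx.symm)
  exact hfinite.subset fun a (ha : g a = b) => by simp [ha]

/-- A discrete semigroup `S` is weakly cancellative (all translation maps are finite-to-one)
if and only if `c₀(S)` (the functions vanishing at infinity, i.e. along the cofinite filter)
is a submodule of `ℓ^∞(S) = ℓ^1(S)^*` for the canonical `ℓ^1(S)`-bimodule actions, i.e.
`c₀(S)` is stable under both translation actions `f ↦ (t ↦ f (t s))` and `f ↦ (t ↦ f (s t))`. -/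
theorem weakly_cancellative_iff_c0_submodule {S : Type*} [Semigroup S] :
    (∀ s t : S, {r : S | r * s = t}.Finite ∧ {r : S | s * r = t}.Finite) ↔
      (∀ f : S → ℂ, Tendsto f cofinite (nhds 0) →
        ∀ s : S, Tendsto (fun t => f (t * s)) cofinite (nhds 0) ∧
          Tendsto (fun t => f (s * t)) cofinite (nhds 0)) := by
  constructor
  · intro h f hf s
    exact ⟨finite_fibers_iff_forall_tendsto_zero_comp.1 (fun t => (h s t).1) f hf,
      finite_fibers_iff_forall_tendsto_zero_comp.1 (fun t => (h s t).2) f hf⟩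
  · intro h s t
    exact ⟨finite_fibers_iff_forall_tendsto_zero_comp.2 (fun f hf => (h f hf s).1) t,
      finite_fibers_iff_forall_tendsto_zero_comp.2 (fun f hf => (h f hf s).2) t⟩
end

section
/- Let S be the semigroup (under composition) of all functions f : ℕ_0 → ℕ_0 for which there is a finite set F ⊆ ℕ (the injective domain) with f mapping F injectively into ℕ and f(n) = 0 for n ∉ F. Let f ∈ S have injective domain F, let F' ⊆ ℕ be finite and disjoint from F, and define g ∈ S with injective domain G ⊇ F ∪ (some set mapped onto F') such that g(n) = n for n ∈ F and g maps ℕ ∩ (G \ F) bijectively onto F'. Then for h ∈ S, we have h ∘ g = f if and only if h(n) = f(n) for all n ∈ F and h(n) = 0 for all n ∈ F'. -/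
/-!
On the injective domain of `f` the map `g` is the identity, so `h ∘ g = f` there says `h = f`.
The rest of the domain of `g` is sent onto `F'`, where `f` vanishes, so there `h ∘ g = f` says
exactly that `h` vanishes on `F'`. Off the domain of `g` both sides are `0`, since `g` sends such
points to `0` and `h 0 = 0` because `0` lies outside every injective domain.
-/

open Set

section

variable {α β : Type*} [Zero β] {f h : α → β} {g : α → α} {s t u : Set α}

theorem eqOn_and_eq_zero_of_comp_eq (hgs : EqOn g id s) (hf : ∀ x ∉ s, f x = 0)
    (hgu : SurjOn g sᶜ u) (hhg : h ∘ g = f) : EqOn h f s ∧ ∀ y ∈ u, h y = 0 := by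
  refine ⟨fun x hx => ?_, fun y hy => ?_⟩
  · simpa [hgs hx] using congrFun hhg x
  · obtain ⟨x, hx, rfl⟩ := hgu hy
    exact (congrFun hhg x).trans (hf x hx)

theorem comp_eq_of_eqOn_of_eq_zero [Zero α] (h0 : h 0 = 0) (hgs : EqOn g id s)
    (hgt : ∀ x ∉ t, g x = 0) (hf : ∀ x ∉ s, f x = 0) (hgu : MapsTo g (t \ s) u)
    (hhs : EqOn h f s) (hhu : ∀ y ∈ u, h y = 0) : h ∘ g = f := by
  funext x
  by_cases hxs : x ∈ s
  · simpa [hgs hxs] using hhs hxs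
  rw [Function.comp_apply, hf x hxs]
  by_cases hxt : x ∈ t
  · exact hhu _ (hgu ⟨hxt, hxs⟩)
  · rw [hgt x hxt, h0]

end

theorem comp_eq_iff_general (f g h : ℕ → ℕ) (F F' Fg Fh : Finset ℕ)
    (hF4 : ∀ n, n ∉ F → f n = 0)
    (hG4 : ∀ n, n ∉ Fg → g n = 0)
    (hgF : ∀ n ∈ F, g n = n) (hgim : g '' ↑(Fg \ F) = ↑F')
    (hH1 : ∀ n ∈ Fh, 0 < n)
    (hH4 : ∀ n, n ∉ Fh → h n = 0) :
    h ∘ g = f ↔ ((∀ n ∈ F, h n = f n) ∧ ∀ n ∈ F', h n = 0) := by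
  rw [Finset.coe_sdiff] at hgim
  have hgF_id : EqOn g id F := hgF
  constructor
  · exact eqOn_and_eq_zero_of_comp_eq hgF_id hF4
      ((hgim ▸ surjOn_image g _).mono (sdiff_subset_compl _ _) subset_rfl)
  · rintro ⟨hhF, hhF'⟩
    have h0 : h 0 = 0 := hH4 0 fun h0 => (hH1 0 h0).false
    exact comp_eq_of_eqOn_of_eq_zero h0 hgF_id hG4 hF4 (hgim ▸ mapsTo_image g _) hhF hhF'

/-- Let `S` be the inverse semigroup (under composition) of functions `f : ℕ₀ → ℕ₀` which map a
finite set `F ⊆ ℕ = {1,2,…}` (the injective domain) injectively into `ℕ` and vanish off `F`.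
Let `f ∈ S` have injective domain `F`, let `F' ⊆ ℕ` be finite and disjoint from `F`, and let
`g ∈ S` have injective domain `Fg ⊇ F` with `g n = n` for `n ∈ F` and `g` mapping `Fg \ F`
onto `F'`.  Then for `h ∈ S`: `h ∘ g = f` iff `h = f` on `F` and `h = 0` on `F'`. -/
theorem comp_eq_iff (f g h : ℕ → ℕ) (F F' Fg Fh : Finset ℕ)
    (hF1 : ∀ n ∈ F, 0 < n) (hF2 : Set.InjOn f ↑F) (hF3 : ∀ n ∈ F, 0 < f n)
    (hF4 : ∀ n, n ∉ F → f n = 0)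
    (hF'pos : ∀ n ∈ F', 0 < n) (hdisj : Disjoint F F')
    (hG1 : ∀ n ∈ Fg, 0 < n) (hG2 : Set.InjOn g ↑Fg) (hG3 : ∀ n ∈ Fg, 0 < g n)
    (hG4 : ∀ n, n ∉ Fg → g n = 0)
    (hFsub : F ⊆ Fg) (hgF : ∀ n ∈ F, g n = n) (hgim : g '' ↑(Fg \ F) = ↑F')
    (hH1 : ∀ n ∈ Fh, 0 < n) (hH2 : Set.InjOn h ↑Fh) (hH3 : ∀ n ∈ Fh, 0 < h n)
    (hH4 : ∀ n, n ∉ Fh → h n = 0) :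
    h ∘ g = f ↔ ((∀ n ∈ F, h n = f n) ∧ ∀ n ∈ F', h n = 0) :=
  comp_eq_iff_general f g h F F' Fg Fh hF4 hG4 hgF hgim hH1 hH4
end

section
/- Let S = (ℕ, max), viewed as a commutative discrete semigroup. For the Banach algebra A = ℓ^1(S) with convolution δ_s * δ_t = δ_{max(s,t)}, the space of weakly almost periodic functionals satisfies WAP(ℓ^∞(S)) = c_0(ℕ) ⊕ ℂ·1, where 1 is the constant function one. -/
/-!
If `f` is bounded and satisfies `WAPmax`, let `f → c` along a non-principal ultrafilter `U`
and `f → M` along another non-principal `u`. Since `max s t = t` eventually along `u` and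
`max s t = s` eventually along `U`, the two iterated limits for `(ω, υ) = (U, u)` are `M` and `c`;
hence `f` has the same limit `c` along every non-principal ultrafilter, i.e. along `cofinite`.

Conversely, if `f → c` along `cofinite`, then `f` extends to a continuous `F : ℕ∞ → ℝ` with
`F ⊤ = c`, and `max` is jointly continuous on `ℕ∞`. If the images of `ω` and `υ` converge in the
compact space `ℕ∞` to `q` and `p`, both iterated limits equal `F (max q p)`.
-/

open Filter

/-- The weak almost periodicity condition for `f ∈ ℓ^∞(ℕ, max)`: for all ultrafilters `ω, υ` on
`ℕ`, the two iterated (Arens-type) limits of `f (max s t)` agree. -/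
def WAPmax (f : ℕ → ℝ) : Prop :=
  ∀ (ω υ : Ultrafilter ℕ) (g k : ℕ → ℝ) (L M : ℝ),
    (∀ s, Tendsto (fun t => f (max s t)) ↑υ (nhds (g s))) → Tendsto g ↑ω (nhds L) →
    (∀ t, Tendsto (fun s => f (max s t)) ↑ω (nhds (k t))) → Tendsto k ↑υ (nhds M) →
    L = M

open Topology

theorem ENat.continuous_of_tendsto_natCast {Y : Type*} [TopologicalSpace Y] {F : ℕ∞ → Y}
    (h : Tendsto (fun n : ℕ => F n) atTop (𝓝 (F ⊤))) : Continuous F := by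
  refine continuous_iff_continuousAt.2 fun x => ?_
  induction x using ENat.recTopCoe with
  | top =>
    refine nhds_top_basis.tendsto_left_iff.2 fun V hV => ?_
    obtain ⟨N, hN⟩ := eventually_atTop.1 (h hV)
    refine ⟨N, ENat.natCast_lt_top N, fun x hx => ?_⟩
    induction x using ENat.recTopCoe with
    | top => exact mem_of_mem_nhds hV
    | coe n => exact hN n (by exact_mod_cast (Set.mem_Ioi.1 hx).le)
  | coe n => simp only [ContinuousAt, ENat.nhds_natCast, tendsto_pure_nhds]

theorem Ultrafilter.exists_tendsto_natCast_enat (u : Ultrafilter ℕ) :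
    ∃ p : ℕ∞, Tendsto ((↑) : ℕ → ℕ∞) u (𝓝 p) := by
  obtain ⟨p, -, hp⟩ := isCompact_univ.ultrafilter_le_nhds (u.map ((↑) : ℕ → ℕ∞)) (by simp)
  exact ⟨p, hp⟩

theorem Ultrafilter.exists_tendsto_of_abs_le {α : Type*} {f : α → ℝ} {C : ℝ}
    (hC : ∀ a, |f a| ≤ C) (u : Ultrafilter α) : ∃ c, Tendsto f u (𝓝 c) := by
  obtain ⟨c, -, hc⟩ := isCompact_Icc.ultrafilter_le_nhds (u.map f)
    (le_principal_iff.2 <| mem_map.2 <| univ_mem' fun a => abs_le.1 (hC a))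
  exact ⟨c, hc⟩

theorem Filter.Tendsto.comp_max_left_of_le_cofinite {α : Type*} {f : ℕ → α} {l : Filter ℕ}
    {l' : Filter α} (hl : l ≤ cofinite) (hf : Tendsto f l l') (s : ℕ) :
    Tendsto (fun t => f (max s t)) l l' :=
  hf.congr' <| ((Nat.cofinite_eq_atTop ▸ eventually_ge_atTop s).filter_mono hl).mono
    fun _ ht => by simp only [max_eq_right ht]

theorem WAPmax.exists_tendsto_cofinite {f : ℕ → ℝ} {C : ℝ} (hC : ∀ n, |f n| ≤ C)
    (hf : WAPmax f) : ∃ c, Tendsto f cofinite (𝓝 c) := by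
  obtain ⟨U, hU⟩ : ∃ U : Ultrafilter ℕ, (U : Filter ℕ) ≤ cofinite :=
    ⟨.of cofinite, Ultrafilter.of_le _⟩
  obtain ⟨c, hc⟩ := U.exists_tendsto_of_abs_le hC
  refine ⟨c, (tendsto_iff_ultrafilter _ _ _).2 fun u hu => ?_⟩
  obtain ⟨M, hM⟩ := u.exists_tendsto_of_abs_le hC
  have hMc : M = c := hf U u _ _ M c (hM.comp_max_left_of_le_cofinite hu) tendsto_const_nhds
    (fun t => by simpa only [max_comm] using hc.comp_max_left_of_le_cofinite hU t)
    tendsto_const_nhds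
  exact hMc ▸ hM

theorem wapMax_of_continuous {f : ℕ → ℝ} {F : ℕ∞ → ℝ} (hF : Continuous F)
    (hfF : ∀ n : ℕ, F n = f n) : WAPmax f := by
  intro ω υ g k L M hg hL hk hM
  obtain ⟨p, hp⟩ := υ.exists_tendsto_natCast_enat
  obtain ⟨q, hq⟩ := ω.exists_tendsto_natCast_enat
  have hmax {l : Filter ℕ} {a b : ℕ → ℕ∞} {x y : ℕ∞} (ha : Tendsto a l (𝓝 x))
      (hb : Tendsto b l (𝓝 y)) : Tendsto (fun n => F (max (a n) (b n))) l (𝓝 (F (max x y))) :=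
    (hF.tendsto _).comp (ha.max hb)
  have hf : ∀ s t : ℕ, f (max s t) = F (max (s : ℕ∞) t) := fun s t => by
    rw [← Nat.mono_cast.map_max, hfF]
  have hg' : g = fun s : ℕ => F (max (s : ℕ∞) p) := funext fun s =>
    tendsto_nhds_unique (hg s) <| by simpa only [hf] using hmax tendsto_const_nhds hp
  have hk' : k = fun t : ℕ => F (max q (t : ℕ∞)) := funext fun t =>
    tendsto_nhds_unique (hk t) <| by simpa only [hf] using hmax hq tendsto_const_nhds
  subst hg' hk'
  exact (tendsto_nhds_unique hL (hmax hq tendsto_const_nhds)).trans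
    (tendsto_nhds_unique hM (hmax tendsto_const_nhds hp)).symm

theorem wapMax_of_tendsto_cofinite {f : ℕ → ℝ} {c : ℝ} (hf : Tendsto f cofinite (𝓝 c)) :
    WAPmax f :=
  wapMax_of_continuous (F := ENat.recTopCoe c f)
    (ENat.continuous_of_tendsto_natCast (by simpa [Nat.cofinite_eq_atTop] using hf))
    (ENat.recTopCoe_natCast (C := fun _ => ℝ) c f)

/-- For `S = (ℕ, max)`, the weakly almost periodic functionals on `ℓ^1(S)` are exactly
`WAP(ℓ^∞(S)) = c₀(ℕ) ⊕ ℂ·1`: a bounded function satisfies the WAP iterated-limit condition iff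
it is the sum of a function vanishing at infinity and a constant. -/
theorem wap_max_eq_c0_plus_constants :
    {f : ℕ → ℝ | (∃ C, ∀ n, |f n| ≤ C) ∧ WAPmax f} =
      {f : ℕ → ℝ | ∃ (g : ℕ → ℝ) (c : ℝ),
        Tendsto g cofinite (nhds 0) ∧ f = fun n => g n + c} := by
  ext f
  constructor
  · rintro ⟨⟨C, hC⟩, hW⟩
    obtain ⟨c, hc⟩ := hW.exists_tendsto_cofinite hC
    exact ⟨fun n => f n - c, c, by simpa using hc.sub_const c, by simp⟩
  · rintro ⟨g, c, hg, rfl⟩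
    have hf : Tendsto (fun n => g n + c) cofinite (𝓝 c) := by simpa using hg.add_const c
    obtain ⟨C, hC⟩ :=
      isBounded_iff_forall_norm_le.1 (Metric.isBounded_range_of_tendsto_cofinite hf)
    exact ⟨⟨C, fun n => hC _ (Set.mem_range_self n)⟩, wapMax_of_tendsto_cofinite hf⟩
end

section
/- For S = (ℕ, max) and f ∈ ℓ^∞(S), if for all non-principal ultrafilters ω, υ on ℕ one has lim_{s→ω} lim_{t→υ} f(max(s,t)) = lim_{t→υ} lim_{s→ω} f(max(s,t)), then f is the sum of a function in c_0(ℕ) and a constant. -/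
open Filter Topology

/-
Along a free ultrafilter `ω`, `f (max s t) = f t` for `ω`-almost every `t`, so both iterated
limits are constant: `lim_{t→υ} f (max s t) = lim_υ f` and `lim_{s→ω} f (max s t) = lim_ω f`.
The hypothesis thus says `lim_υ f = lim_ω f` for all free `ω, υ`. A bounded sequence has a limit
along every ultrafilter, so all free ultrafilter limits of `f` equal one number `c`; hence
`f → c` along the cofinite filter and `f - c` vanishes at infinity.
-/

lemma exists_tendsto_ultrafilter_of_abs_le {α : Type*} {f : α → ℝ} {C : ℝ}
    (hC : ∀ a, |f a| ≤ C) (u : Ultrafilter α) : ∃ L, Tendsto f u (𝓝 L) := by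
  have hmem : ↑(u.map f) ≤ 𝓟 (Set.Icc (-C) C) := by
    rw [Ultrafilter.coe_map, le_principal_iff, mem_map]
    exact univ_mem' fun a => abs_le.mp (hC a)
  obtain ⟨L, -, hL⟩ := isCompact_Icc.ultrafilter_le_nhds (u.map f) hmem
  exact ⟨L, hL⟩

lemma Filter.Tendsto.comp_max_left {α β : Type*} [LinearOrder α] {f : α → β} {u : Filter α}
    {l : Filter β} (hu : u ≤ atTop) (hf : Tendsto f u l) (s : α) :
    Tendsto (fun t => f (max s t)) u l :=
  hf.congr' <| Eventually.mono (hu (eventually_ge_atTop s)) fun _ ht =>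
    congrArg f (max_eq_right ht).symm

/-- For `S = (ℕ, max)` and bounded `f : ℕ → ℝ`, if for all free (non-principal) ultrafilters
`ω, υ` on `ℕ` the iterated limits `lim_{s→ω} lim_{t→υ} f (max s t)` and
`lim_{t→υ} lim_{s→ω} f (max s t)` agree, then `f` is the sum of a function vanishing at
infinity and a constant. -/
theorem wap_iterated_limits_imp_c0_plus_const (f : ℕ → ℝ) (hb : ∃ C, ∀ n, |f n| ≤ C)
    (h : ∀ (ω υ : Ultrafilter ℕ), (↑ω ≤ (cofinite : Filter ℕ)) → (↑υ ≤ (cofinite : Filter ℕ)) →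
      ∀ (g k : ℕ → ℝ) (L M : ℝ),
        (∀ s, Tendsto (fun t => f (max s t)) ↑υ (nhds (g s))) → Tendsto g ↑ω (nhds L) →
        (∀ t, Tendsto (fun s => f (max s t)) ↑ω (nhds (k t))) → Tendsto k ↑υ (nhds M) →
        L = M) :
    ∃ (g : ℕ → ℝ) (c : ℝ), Tendsto g cofinite (nhds 0) ∧ f = fun n => g n + c := by
  obtain ⟨C, hC⟩ := hb
  obtain ⟨ω, hω⟩ := exists_ultrafilter_le (cofinite : Filter ℕ)
  obtain ⟨c, hc⟩ := exists_tendsto_ultrafilter_of_abs_le hC ω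
  have hf : Tendsto f cofinite (𝓝 c) := by
    refine (tendsto_iff_ultrafilter _ _ _).2 fun υ hυ => ?_
    obtain ⟨L, hL⟩ := exists_tendsto_ultrafilter_of_abs_le hC υ
    have hω' : (ω : Filter ℕ) ≤ atTop := hω.trans Nat.cofinite_eq_atTop.le
    have hυ' : (υ : Filter ℕ) ≤ atTop := hυ.trans Nat.cofinite_eq_atTop.le
    have hLc : L = c := h ω υ hω hυ (fun _ => L) (fun _ => c) L c
      (hL.comp_max_left hυ') tendsto_const_nhds
      (fun t => (hc.comp_max_left hω' t).congr fun s => by rw [max_comm]) tendsto_const_nhds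
    rwa [← hLc]
  exact ⟨fun n => f n - c, c, by simpa using hf.sub_const c, by simp⟩
end

section
/- Let A_* be a Banach space, A = (A_*)^*, and let F ⊆ A^* be a closed subspace containing the canonical image of A_* such that F/A_* is one-dimensional. Let E ⊆ F be a closed subspace which is a predual for A (i.e., the canonical map A → E^* is an isomorphism). Then the annihilator E^⊥ = { M ∈ F^* : ⟨M, μ⟩ = 0 for all μ ∈ E } is one-dimensional. -/
/-!
Let `ρ : A → F^*` be evaluation restricted to `F` and `r : F^* → E^*` restriction to `E`, so that
`E^⊥ = ker r`. As `r ∘ ρ` is the predual isomorphism `A ≃ E^*`, `ker r` is a complement of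
`range ρ`, hence `E^⊥ ≅ F^* / range ρ`. Restriction `σ : F^* → A` along `A₀ ↪ F` satisfies
`σ ∘ ρ = id`, so by the same argument `F^* / range ρ` is isomorphic to the annihilator of `A₀`
in `F^*`. Since `A₀` is complete, it is closed in `F` of codimension one, and so its
annihilator is one-dimensional.
-/

open NormedSpace

noncomputable instance annihilatorAuxACG {A₀ : Type*} [NormedAddCommGroup A₀] [NormedSpace ℂ A₀]
    (F : Submodule ℂ (StrongDual ℂ (StrongDual ℂ A₀))) : AddCommGroup F :=
  @Submodule.addCommGroup ℂ _ _ ContinuousLinearMap.addCommGroup _ F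

namespace LinearMap

variable {K A V U : Type*} [Ring K] [AddCommGroup A] [AddCommGroup V] [AddCommGroup U]
  [Module K A] [Module K V] [Module K U]

theorem isCompl_range_ker_of_bijective_comp (ρ : A →ₗ[K] V) (r : V →ₗ[K] U)
    (h : Function.Bijective (r ∘ₗ ρ)) : IsCompl (range ρ) (ker r) := by
  constructor
  · rw [Submodule.disjoint_def]
    rintro _ ⟨a, rfl⟩ ha
    rw [h.1 (show (r ∘ₗ ρ) a = (r ∘ₗ ρ) 0 by simpa using ha), map_zero]
  · rw [codisjoint_iff, eq_top_iff]
    intro v _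
    obtain ⟨a, ha⟩ := h.2 (r v)
    have hker : v - ρ a ∈ ker r := by simp [← ha]
    simpa using Submodule.add_mem_sup (mem_range_self ρ a) hker

theorem rank_ker_eq_rank_quotient_range_of_bijective_comp (ρ : A →ₗ[K] V) (r : V →ₗ[K] U)
    (h : Function.Bijective (r ∘ₗ ρ)) :
    Module.rank K (ker r) = Module.rank K (V ⧸ range ρ) :=
  (Submodule.quotientEquivOfIsCompl _ _ (isCompl_range_ker_of_bijective_comp ρ r h)).rank_eq.symm

end LinearMap

theorem ContinuousLinearMap.rank_ker_precomp_eq_one {𝕜 V W : Type*} [NontriviallyNormedField 𝕜]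
    [AddCommGroup V] [TopologicalSpace V] [IsTopologicalAddGroup V] [Module 𝕜 V]
    [ContinuousSMul 𝕜 V] [AddCommGroup W] [TopologicalSpace W] [Module 𝕜 W]
    (T : W →L[𝕜] V) (hT : IsClosed (LinearMap.range (T : W →ₗ[𝕜] V) : Set V))
    (h : Module.rank 𝕜 (V ⧸ LinearMap.range (T : W →ₗ[𝕜] V)) = 1) :
    Module.rank 𝕜 (precomp 𝕜 T (τ := .id 𝕜)).toLinearMap.ker = 1 := by
  obtain ⟨e⟩ := Module.nonempty_linearEquiv_iff_rank_eq_one.2 h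
  let Λ₀ : V →ₗ[𝕜] 𝕜 := e.symm.toLinearMap ∘ₗ (LinearMap.range (T : W →ₗ[𝕜] V)).mkQ
  have hker : LinearMap.ker Λ₀ = LinearMap.range (T : W →ₗ[𝕜] V) := by
    rw [LinearMap.ker_comp, LinearEquiv.ker, Submodule.comap_bot, Submodule.ker_mkQ]
  let Λ : StrongDual 𝕜 V := ⟨Λ₀, Λ₀.continuous_of_isClosed_ker (hker ▸ hT)⟩
  obtain ⟨x₀, hx₀⟩ : ∃ x₀, Λ x₀ = 1 := by
    obtain ⟨x₀, hx₀⟩ := Submodule.mkQ_surjective _ (e 1)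
    exact ⟨x₀, by simp [Λ, Λ₀, hx₀]⟩
  have hΛ : Λ ∈ (precomp 𝕜 T (τ := .id 𝕜)).toLinearMap.ker := by
    ext w
    simp [Λ, Λ₀]
  -- The additive structure of a submodule of `StrongDual` is not reducibly that of an
  -- `AddCommGroup`, so this instance has to be supplied by hand.
  have := Module.Free.of_divisionRing 𝕜 (precomp 𝕜 T (τ := .id 𝕜)).toLinearMap.ker
  refine (rank_eq_one_iff (V := (precomp 𝕜 T (τ := .id 𝕜)).toLinearMap.ker)).2
    ⟨⟨Λ, hΛ⟩, fun h0 => ?_, ?_⟩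
  · simp [show Λ = 0 from congrArg Subtype.val h0] at hx₀
  · rintro ⟨N, hN⟩
    refine ⟨N x₀, Subtype.ext (ContinuousLinearMap.ext fun x => ?_)⟩
    obtain ⟨w, hw⟩ : x - Λ x • x₀ ∈ LinearMap.range (T : W →ₗ[𝕜] V) := by
      rw [← hker, LinearMap.mem_ker, map_sub, map_smul]
      change Λ x - Λ x • Λ x₀ = 0
      simp [hx₀]
    have hNw : N (x - Λ x • x₀) = 0 := hw ▸ DFunLike.congr_fun hN w
    rw [map_sub, map_smul, sub_eq_zero] at hNw
    simp [hNw, mul_comm]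

theorem NormedSpace.isClosed_range_inclusionInDoubleDual (𝕜 E : Type*) [RCLike 𝕜]
    [NormedAddCommGroup E] [NormedSpace 𝕜 E] [CompleteSpace E] :
    IsClosed (Set.range (inclusionInDoubleDual 𝕜 E)) :=
  have hiso : Isometry (inclusionInDoubleDualLi 𝕜 (E := E)) := (inclusionInDoubleDualLi 𝕜).isometry
  hiso.isClosedEmbedding.isClosed_range

theorem annihilator_one_dimensional_general {A₀ : Type*} [NormedAddCommGroup A₀] [NormedSpace ℂ A₀]
    [CompleteSpace A₀]
    (F : Submodule ℂ (StrongDual ℂ (StrongDual ℂ A₀)))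
    (hsub : LinearMap.range (inclusionInDoubleDual ℂ A₀ :
      A₀ →ₗ[ℂ] StrongDual ℂ (StrongDual ℂ A₀)) ≤ F)
    (hquot : Module.rank ℂ
      (F ⧸ (LinearMap.range (inclusionInDoubleDual ℂ A₀ :
        A₀ →ₗ[ℂ] StrongDual ℂ (StrongDual ℂ A₀))).comap F.subtype) = 1)
    (E : Submodule ℂ (StrongDual ℂ (StrongDual ℂ A₀)))
    (hEF : E ≤ F)
    (hpre : Function.Bijective (fun a : StrongDual ℂ A₀ =>
      ((inclusionInDoubleDual ℂ (StrongDual ℂ A₀)) a).comp E.subtypeL)) :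
    ∃ M₀ : StrongDual ℂ F, M₀ ≠ 0 ∧ (∀ μ : E, M₀ ⟨μ.1, hEF μ.2⟩ = 0) ∧
      ∀ M : StrongDual ℂ F, (∀ μ : E, M ⟨μ.1, hEF μ.2⟩ = 0) → ∃ c : ℂ, M = c • M₀ := by
  let ιF : A₀ →L[ℂ] F := (inclusionInDoubleDual ℂ A₀).codRestrict F fun x => hsub ⟨x, rfl⟩
  let ρ : StrongDual ℂ A₀ →L[ℂ] StrongDual ℂ F :=
    (ContinuousLinearMap.precomp ℂ F.subtypeL).comp (inclusionInDoubleDual ℂ (StrongDual ℂ A₀))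
  let σ := ContinuousLinearMap.precomp ℂ ιF (τ := .id ℂ)
  let r := ContinuousLinearMap.precomp ℂ (E.subtypeL.codRestrict F fun μ => hEF μ.2) (τ := .id ℂ)
  have hrange : LinearMap.range (ιF : A₀ →ₗ[ℂ] F) =
      (LinearMap.range (inclusionInDoubleDual ℂ A₀ : A₀ →ₗ[ℂ] _)).comap F.subtype :=
    LinearMap.range_codRestrict _ _ _
  have hclosed : IsClosed (LinearMap.range (ιF : A₀ →ₗ[ℂ] F) : Set F) := by
    rw [hrange]
    exact (isClosed_range_inclusionInDoubleDual ℂ A₀).preimage continuous_subtype_val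
  have hσρ : Function.Bijective (σ.toLinearMap ∘ₗ ρ.toLinearMap) := by
    convert Function.bijective_id
    ext a x
    rfl
  have hrρ : Function.Bijective (r.toLinearMap ∘ₗ ρ.toLinearMap) := hpre
  have := @Submodule.topologicalAddGroup ℂ _ _ ContinuousLinearMap.addCommGroup _ _ _ F
  have hrank : Module.rank ℂ r.toLinearMap.ker = 1 := by
    rw [LinearMap.rank_ker_eq_rank_quotient_range_of_bijective_comp _ _ hrρ,
      ← LinearMap.rank_ker_eq_rank_quotient_range_of_bijective_comp _ _ hσρ]
    exact ιF.rank_ker_precomp_eq_one hclosed (hrange ▸ hquot)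
  have hmem (M : StrongDual ℂ F) : M ∈ r.toLinearMap.ker ↔ ∀ μ : E, M ⟨μ.1, hEF μ.2⟩ = 0 :=
    LinearMap.mem_ker.trans ContinuousLinearMap.ext_iff
  have := Module.Free.of_divisionRing ℂ r.toLinearMap.ker
  obtain ⟨⟨M₀, hM₀⟩, hne, hspan⟩ := (rank_eq_one_iff (V := r.toLinearMap.ker)).1 hrank
  refine ⟨M₀, fun h => hne (Subtype.ext h), (hmem M₀).1 hM₀, fun M hM => ?_⟩
  obtain ⟨c, hc⟩ := hspan ⟨M, (hmem M).2 hM⟩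
  exact ⟨c, congrArg Subtype.val hc.symm⟩

/-- Let `A₀` be a Banach space, `A = A₀^*`, and `F ⊆ A^*` a closed subspace containing the
canonical image of `A₀` with `F/A₀` one-dimensional.  If `E ⊆ F` is a closed subspace which is
a predual for `A` (the canonical evaluation map `A → E^*` is bijective, hence an isomorphism),
then the annihilator `E^⊥ = {M ∈ F^* : M|_E = 0}` is one-dimensional. -/
theorem annihilator_one_dimensional {A₀ : Type*} [NormedAddCommGroup A₀] [NormedSpace ℂ A₀]
    [CompleteSpace A₀]
    (F : Submodule ℂ (StrongDual ℂ (StrongDual ℂ A₀)))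
    (hFclosed : IsClosed (F : Set (StrongDual ℂ (StrongDual ℂ A₀))))
    (hsub : LinearMap.range (inclusionInDoubleDual ℂ A₀ :
      A₀ →ₗ[ℂ] StrongDual ℂ (StrongDual ℂ A₀)) ≤ F)
    (hquot : Module.rank ℂ
      (F ⧸ (LinearMap.range (inclusionInDoubleDual ℂ A₀ :
        A₀ →ₗ[ℂ] StrongDual ℂ (StrongDual ℂ A₀))).comap F.subtype) = 1)
    (E : Submodule ℂ (StrongDual ℂ (StrongDual ℂ A₀)))
    (hEF : E ≤ F)
    (hEclosed : IsClosed (E : Set (StrongDual ℂ (StrongDual ℂ A₀))))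
    (hpre : Function.Bijective (fun a : StrongDual ℂ A₀ =>
      ((inclusionInDoubleDual ℂ (StrongDual ℂ A₀)) a).comp E.subtypeL)) :
    ∃ M₀ : StrongDual ℂ F, M₀ ≠ 0 ∧ (∀ μ : E, M₀ ⟨μ.1, hEF μ.2⟩ = 0) ∧
      ∀ M : StrongDual ℂ F, (∀ μ : E, M ⟨μ.1, hEF μ.2⟩ = 0) → ∃ c : ℂ, M = c • M₀ :=
  annihilator_one_dimensional_general F hsub hquot E hEF hpre
end

section
/- Let a = Σ_n a_n δ_n ∈ ℓ^1(ℕ) be nonzero with Σ_n a_n ≠ 0, and consider the module action of ℓ^1(ℕ, max) on ℓ^1(ℕ) given by δ_s · a = (Σ_{n=1}^s a_n) δ_s + Σ_{n=s+1}^∞ a_n δ_n. Suppose x = (x_n) ∈ c_0(ℕ) satisfies ⟨δ_s · a, x⟩ = ⟨a, x⟩ for all s ∈ ℕ, i.e., Σ_{n=1}^s a_n x_n = x_s Σ_{n=1}^s a_n for all s. Then ⟨a, x⟩ = Σ_n a_n x_n = 0. -/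
open Filter Topology Finset

theorem tsum_eq_zero_of_tendsto_sum_range {α : Type*} [AddCommMonoid α] [TopologicalSpace α]
    [T2Space α] {f : ℕ → α} (h : Tendsto (fun s => ∑ n ∈ range s, f n) atTop (𝓝 0)) :
    ∑' n, f n = 0 := by
  by_cases hf : Summable f
  · exact tendsto_nhds_unique hf.hasSum.tendsto_sum_nat h
  · exact tsum_eq_zero_of_not_summable hf

theorem max_module_action_pairing_zero_general (a : ℕ → ℝ) (ha : Summable a)
    (x : ℕ → ℝ) (hx : Tendsto x atTop (nhds 0))
    (hrel : ∀ s : ℕ, ∑ n ∈ Finset.range (s + 1), a n * x n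
      = x s * ∑ n ∈ Finset.range (s + 1), a n) :
    ∑' n, a n * x n = 0 := by
  have h_sum_a : Tendsto (fun s => ∑ n ∈ range (s + 1), a n) atTop (𝓝 (∑' n, a n)) :=
    (tendsto_add_atTop_iff_nat 1).mpr ha.hasSum.tendsto_sum_nat
  have h_partial : Tendsto (fun s => ∑ n ∈ range (s + 1), a n * x n) atTop (𝓝 0) := by
    simpa only [hrel, zero_mul] using hx.mul h_sum_a
  exact tsum_eq_zero_of_tendsto_sum_range ((tendsto_add_atTop_iff_nat 1).mp h_partial)

/-- Let `a ∈ ℓ^1(ℕ)` be nonzero with `∑ aₙ ≠ 0`, and let `x ∈ c₀(ℕ)` satisfy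
`⟨δ_s · a, x⟩ = ⟨a, x⟩` for all `s`, i.e. `∑_{n ≤ s} aₙ xₙ = x_s ∑_{n ≤ s} aₙ` for all `s`
(the module action coming from convolution in `(ℕ, max)`).  Then `⟨a, x⟩ = ∑ aₙ xₙ = 0`. -/
theorem max_module_action_pairing_zero (a : ℕ → ℝ) (ha : Summable a) (hane : a ≠ 0)
    (hsum : ∑' n, a n ≠ 0)
    (x : ℕ → ℝ) (hx : Tendsto x atTop (nhds 0))
    (hrel : ∀ s : ℕ, ∑ n ∈ Finset.range (s + 1), a n * x n
      = x s * ∑ n ∈ Finset.range (s + 1), a n) :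
    ∑' n, a n * x n = 0 :=
  max_module_action_pairing_zero_general a ha x hx hrel
end

section
/- Let S be a commutative subsemigroup of a commutative group (G, +), let (w_n) be a sequence in S satisfying the uniqueness condition (*): each element of G can be written in at most one way as Σ_{i∈A} w_i − Σ_{j∈B} w_j with A, B disjoint finite subsets of ℕ. For (a, s) ∈ ℤ_+ × S and α ∈ ℕ, let U_{a,s,α} = { (a − k, s + Σ_{i=1}^k w_{m_i}) : 0 ≤ k ≤ a, α ≤ m_1 < ... < m_k }. Then the collection of all U_{a,s,α} forms a base for a topology on ℤ_+ × S. -/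
/-!
If `p = (a - |T|, s + ∑_{m ∈ T} w m)` lies in `U_{a,s,α}`, then for `γ` above `α` and above every
index of `T`, any point of `U_{p,γ}` is reached from `(a, s)` through the index set `T ∪ R` with
`R` disjoint from `T`, so `U_{p,γ} ⊆ U_{a,s,α}`. Choosing `γ` large for two basic sets at once
gives the intersection property of a base.
-/

/-- The basic set `U_{a,s,α} = { (a − k, s + ∑_{i=1}^k w_{m_i}) : 0 ≤ k ≤ a, α ≤ m_1 < ⋯ < m_k }`
inside `ℤ₊ × S`. -/
def Ubase {G : Type*} [AddCommGroup G] (S : AddSubsemigroup G) (w : ℕ → G)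
    (a : ℕ) (s : G) (α : ℕ) : Set (ℕ × S) :=
  {p | ∃ t : Finset ℕ, t.card ≤ a ∧ (∀ m ∈ t, α ≤ m) ∧
    p.1 = a - t.card ∧ (p.2 : G) = s + ∑ m ∈ t, w m}

open Filter

section

variable {G : Type*} [AddCommGroup G] (S : AddSubsemigroup G) (w : ℕ → G)

lemma mem_Ubase_self (p : ℕ × S) (γ : ℕ) : p ∈ Ubase S w p.1 p.2 γ :=
  ⟨∅, by simp⟩

lemma Ubase_subset_of_mem {a α : ℕ} {s : G} {p : ℕ × S} (hp : p ∈ Ubase S w a s α) :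
    ∀ᶠ γ in atTop, Ubase S w p.1 p.2 γ ⊆ Ubase S w a s α := by
  obtain ⟨T, hTa, hTα, hp1, hp2⟩ := hp
  filter_upwards [eventually_ge_atTop α, eventually_gt_atTop (T.sup id)] with γ hαγ hTγ
  rintro q ⟨R, hRc, hRγ, hq1, hq2⟩
  have hdisj : Disjoint T R := Finset.disjoint_left.2 fun m hmT hmR =>
    (hRγ m hmR).not_gt ((Finset.le_sup (f := id) hmT).trans_lt hTγ)
  refine ⟨T ∪ R, ?_, ?_, ?_, ?_⟩
  · rw [Finset.card_union_of_disjoint hdisj]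
    omega
  · simp only [Finset.mem_union]
    rintro m (hm | hm)
    exacts [hTα m hm, hαγ.trans (hRγ m hm)]
  · rw [Finset.card_union_of_disjoint hdisj, hq1, hp1]
    omega
  · rw [hq2, hp2, Finset.sum_union hdisj, add_assoc]

end

theorem Ubase_isTopologicalBasis_general {G : Type*} [AddCommGroup G] (S : AddSubsemigroup G)
    (w : ℕ → G) :
    @TopologicalSpace.IsTopologicalBasis (ℕ × S)
      (TopologicalSpace.generateFrom
        {V : Set (ℕ × S) | ∃ (a : ℕ) (s : S) (α : ℕ), V = Ubase S w a (s : G) α})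
      {V : Set (ℕ × S) | ∃ (a : ℕ) (s : S) (α : ℕ), V = Ubase S w a (s : G) α} := by
  let : TopologicalSpace (ℕ × S) := TopologicalSpace.generateFrom
    {V : Set (ℕ × S) | ∃ (a : ℕ) (s : S) (α : ℕ), V = Ubase S w a (s : G) α}
  refine ⟨?_, ?_, rfl⟩
  · rintro _ ⟨a, s, α, rfl⟩ _ ⟨b, t, β, rfl⟩ p ⟨hpU, hpV⟩
    obtain ⟨γ, hU, hV⟩ := ((Ubase_subset_of_mem S w hpU).and (Ubase_subset_of_mem S w hpV)).exists
    exact ⟨_, ⟨p.1, p.2, γ, rfl⟩, mem_Ubase_self S w p γ, Set.subset_inter hU hV⟩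
  · exact Set.eq_univ_of_forall fun p => ⟨_, ⟨p.1, p.2, 0, rfl⟩, mem_Ubase_self S w p 0⟩

/-- Let `S` be a subsemigroup of a commutative group `G` and `(w_n)` a sequence in `S`
satisfying the uniqueness condition (*).  Then the collection of all sets `U_{a,s,α}` forms a
base for a topology on `ℤ₊ × S`. -/
theorem Ubase_isTopologicalBasis {G : Type*} [AddCommGroup G] (S : AddSubsemigroup G)
    (w : ℕ → G) (hw : ∀ n, w n ∈ S)
    (huniq : ∀ A B A' B' : Finset ℕ, Disjoint A B → Disjoint A' B' →
      (∑ i ∈ A, w i) - (∑ j ∈ B, w j) = (∑ i ∈ A', w i) - (∑ j ∈ B', w j) →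
      A = A' ∧ B = B') :
    @TopologicalSpace.IsTopologicalBasis (ℕ × S)
      (TopologicalSpace.generateFrom
        {V : Set (ℕ × S) | ∃ (a : ℕ) (s : S) (α : ℕ), V = Ubase S w a (s : G) α})
      {V : Set (ℕ × S) | ∃ (a : ℕ) (s : S) (α : ℕ), V = Ubase S w a (s : G) α} :=
  Ubase_isTopologicalBasis_general S w
end
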